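/- Let f : ℍ(𝒦,𝒜) → ℝ be smooth, let u = (u_1,…,u_l) ∈ ∏_{j=1}^l ℂ^{k_j} with u_l ≠ 0 and 0 < |η| < π. Then for every s ∈ (0,1], writing g_s = Ψ(u,sη): (d/ds) f(g_s) = 2η Σ_{i=1}^l a_i Σ_{j=1}^{k_i} [(sin(2a_isη) Re u_{i,j} − cos(2a_isη) Im u_{i,j}) X_{i,j}f(g_s) + (sin(2a_isη) Im u_{i,j} + cos(2a_isη) Re u_{i,j}) Y_{i,j}f(g_s)]; consequently |(d/ds) f(Ψ(u,sη))| ≤ U|η| · |∇f(Ψ(u,sη))|. -/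

import Mathlib

open MeasureTheory Real Complex Finset Filter Topology

noncomputable section

/-- The underlying space of the nonisotropic Heisenberg group `ℍ(𝒦,𝒜)`, where the number of
blocks is `l + 1`, the block dimensions are `k 0, …, k l` and the parameters are
`a 0 < ⋯ < a l`. A point is a pair `(z, t)` with `z i : Fin (k i) → ℂ` and `t : ℝ`. -/
abbrev Heis (l : ℕ) (k : Fin (l + 1) → ℕ) : Type :=
  ((i : Fin (l + 1)) → (Fin (k i) → ℂ)) × ℝ

variable (l : ℕ) (k : Fin (l + 1) → ℕ) (a : Fin (l + 1) → ℝ)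

/-- The group multiplication of `ℍ(𝒦,𝒜)`:
`(z,t)·(z′,t′) = (z + z′, t + t′ + 2 ∑ᵢ aᵢ Im⟨zᵢ, zᵢ′⟩)`. -/
def hmul (g g' : Heis l k) : Heis l k :=
  (g.1 + g'.1,
    g.2 + g'.2 + 2 * ∑ i, a i * (∑ j, (starRingEnd ℂ) (g.1 i j) * g'.1 i j).im)

/-- The group inversion of `ℍ(𝒦,𝒜)`: `(z,t)⁻¹ = (-z,-t)`. -/
def hinv (g : Heis l k) : Heis l k := (-g.1, -g.2)

/-- `|z i|²`, the squared Euclidean norm of the `i`-th block of `z`. -/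
def zNormSq (z : (i : Fin (l + 1)) → Fin (k i) → ℂ) (i : Fin (l + 1)) : ℝ :=
  ∑ j, Complex.normSq (z i j)

/-- The left-invariant vector field `X_{i,j} = ∂_{x_{i,j}} + 2 aᵢ y_{i,j} ∂_t`, applied to a
function `f` at a point `g`, realized as a directional (line) derivative. -/
def Xvf (i : Fin (l + 1)) (j : Fin (k i)) (f : Heis l k → ℝ) (g : Heis l k) : ℝ :=
  lineDeriv ℝ f g (Pi.single i (Pi.single j (1 : ℂ)), 2 * a i * (g.1 i j).im)

/-- The left-invariant vector field `Y_{i,j} = ∂_{y_{i,j}} - 2 aᵢ x_{i,j} ∂_t`. -/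
def Yvf (i : Fin (l + 1)) (j : Fin (k i)) (f : Heis l k → ℝ) (g : Heis l k) : ℝ :=
  lineDeriv ℝ f g (Pi.single i (Pi.single j (Complex.I)), -(2 * a i * (g.1 i j).re))

/-- The right-invariant vector field `X̂_{i,j} = ∂_{x_{i,j}} - 2 aᵢ y_{i,j} ∂_t`. -/
def XvfR (i : Fin (l + 1)) (j : Fin (k i)) (f : Heis l k → ℝ) (g : Heis l k) : ℝ :=
  lineDeriv ℝ f g (Pi.single i (Pi.single j (1 : ℂ)), -(2 * a i * (g.1 i j).im))

/-- The right-invariant vector field `Ŷ_{i,j} = ∂_{y_{i,j}} + 2 aᵢ x_{i,j} ∂_t`. -/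
def YvfR (i : Fin (l + 1)) (j : Fin (k i)) (f : Heis l k → ℝ) (g : Heis l k) : ℝ :=
  lineDeriv ℝ f g (Pi.single i (Pi.single j (Complex.I)), 2 * a i * (g.1 i j).re)

/-- `|∇f|(g)`, the Euclidean length of the horizontal (left-invariant) gradient of `f` at `g`. -/
def gradNorm (f : Heis l k → ℝ) (g : Heis l k) : ℝ :=
  Real.sqrt (∑ i, ∑ j, ((Xvf l k a i j f g) ^ 2 + (Yvf l k a i j f g) ^ 2))

/-- The heat kernel `p_h(z,t)` at time `h` of `ℍ(𝒦,𝒜)`, as a complex integral: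
`p_h(z,t) = (2(4πh)^{n+1})⁻¹ ∫_ℝ ∏ⱼ (aⱼλ/sinh(aⱼλ))^{kⱼ}
  exp((4h)⁻¹(iλt − ∑ⱼ |zⱼ|² aⱼλ coth(aⱼλ))) dλ`. -/
def heatKernelC (h : ℝ) (g : Heis l k) : ℂ :=
  (2 * (4 * Real.pi * h) ^ ((∑ i, k i) + 1) : ℂ)⁻¹ *
    ∫ lam : ℝ,
      ((∏ j, ((a j * lam) / Real.sinh (a j * lam)) ^ (k j) : ℝ) : ℂ) *
        Complex.exp ((4 * (h : ℂ))⁻¹ *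
          (Complex.I * (lam : ℂ) * (g.2 : ℂ) -
            ∑ j, ((zNormSq l k g.1 j : ℝ) : ℂ) *
              ((a j * lam * (Real.cosh (a j * lam) / Real.sinh (a j * lam)) : ℝ) : ℂ)))

/-- The (real-valued) heat kernel `p_h` of `ℍ(𝒦,𝒜)`. -/
def heatKernel (h : ℝ) (g : Heis l k) : ℝ := (heatKernelC l k a h g).re

/-- The heat semigroup: `e^{hΔ} f (g) = ∫_ℍ f(g·g′) p_h(g′) dm(g′)`, with `m` the Lebesgue
(Haar) measure on `ℍ(𝒦,𝒜)`. -/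
def heatSemigroup (h : ℝ) (f : Heis l k → ℝ) (g : Heis l k) : ℝ :=
  ∫ g' : Heis l k, f (hmul l k a g g') * heatKernel l k a h g'

/-- `μ(ω) = (2ω − sin 2ω)/(2 sin²ω)`; note that at `ω = 0` Lean's convention `0/0 = 0`
gives exactly the continuous extension `μ(0) = 0`. -/
def muF (ω : ℝ) : ℝ := (2 * ω - Real.sin (2 * ω)) / (2 * Real.sin ω ^ 2)

/-- `x / sin x`, extended continuously by `1` at `x = 0`. -/
def sdiv (x : ℝ) : ℝ := if x = 0 then 1 else x / Real.sin x

/-- The angle `θ(z,t) ∈ (−π,π)` solving `t = ∑ⱼ aⱼ μ(aⱼθ)|zⱼ|²`, chosen by the epsilon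
operator (whenever a solution exists it is unique, and `thetaOf` is that solution). -/
def thetaOf (g : Heis l k) : ℝ :=
  Classical.epsilon fun θ : ℝ => θ ∈ Set.Ioo (-Real.pi) Real.pi ∧
    g.2 = ∑ j, a j * muF (a j * θ) * zNormSq l k g.1 j

/-- The squared Carnot–Carathéodory distance from `g = (z,t)` to the origin:
if `z_l ≠ 0`, or `z_l = 0` and `|t| < ∑_{j<l} aⱼ μ(aⱼπ)|zⱼ|²`, it is
`∑ⱼ (aⱼθ/sin(aⱼθ))² |zⱼ|²` with `θ = θ(z,t)`; otherwise it is
`π(|t| + ∑_{j<l} aⱼ cot(aⱼπ)|zⱼ|²)`. -/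
def ccDistSq (g : Heis l k) : ℝ :=
  if g.1 (Fin.last l) ≠ 0 ∨
      |g.2| < ∑ j ∈ Finset.univ.erase (Fin.last l),
        a j * muF (a j * Real.pi) * zNormSq l k g.1 j then
    ∑ j, (sdiv (a j * thetaOf l k a g)) ^ 2 * zNormSq l k g.1 j
  else
    Real.pi * (|g.2| + ∑ j ∈ Finset.univ.erase (Fin.last l),
      a j * (Real.cos (a j * Real.pi) / Real.sin (a j * Real.pi)) * zNormSq l k g.1 j)

/-- The Carnot–Carathéodory distance from `g` to the origin. -/
def ccDist (g : Heis l k) : ℝ := Real.sqrt (ccDistSq l k a g)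

/-- The Carnot–Carathéodory unit ball `B` of `ℍ(𝒦,𝒜)`. -/
def ballCC : Set (Heis l k) := {g | ccDist l k a g < 1}

/-- `m_f`, the mean of `f` over the Carnot–Carathéodory unit ball. -/
def meanB (f : Heis l k → ℝ) : ℝ :=
  (∫ g in ballCC l k a, f g) / (volume (ballCC l k a)).toReal

/-- The polar coordinates map
`Ψ(u,η) = ((1−e^{−2ia₁η})u₁, …, (1−e^{−2ia_lη})u_l, ∑ⱼ 2aⱼ|uⱼ|²(2aⱼη − sin(2aⱼη)))`. -/
def Psi (u : (i : Fin (l + 1)) → Fin (k i) → ℂ) (η : ℝ) : Heis l k :=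
  (fun i => fun j => (1 - Complex.exp (-(2 * Complex.I * (a i : ℂ) * (η : ℂ)))) * u i j,
    ∑ j, 2 * a j * zNormSq l k u j * (2 * a j * η - Real.sin (2 * a j * η)))

/-- `U = (4 ∑ⱼ aⱼ²|uⱼ|²)^{1/2}`. -/
def Ufun (u : (i : Fin (l + 1)) → Fin (k i) → ℂ) : ℝ :=
  Real.sqrt (4 * ∑ j, (a j) ^ 2 * zNormSq l k u j)

/-- The Jacobian determinant `J(u,η)` of `Ψ` at `(u,η)` (the determinant of the total
derivative of `Ψ` as a map of the real vector space `ℍ ≅ ℝ^{2n+1}`). -/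
def jacPsi (u : (i : Fin (l + 1)) → Fin (k i) → ℂ) (η : ℝ) : ℝ :=
  LinearMap.det
    ((fderiv ℝ (fun q : Heis l k => Psi l k a q.1 q.2) (u, η)) : Heis l k →ₗ[ℝ] Heis l k)



lemma aux_ineq (l : ℕ) (k : Fin (l + 1) → ℕ) (a : Fin (l + 1) → ℝ) (ha : ∀ i, 0 ≤ a i)
    (u : (i : Fin (l + 1)) → Fin (k i) → ℂ) (θ : Fin (l + 1) → ℝ) (η : ℝ)
    (X Y : (i : Fin (l + 1)) → Fin (k i) → ℝ) :
    |2 * η * ∑ i, a i * ∑ j,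
        ((Real.sin (θ i) * (u i j).re - Real.cos (θ i) * (u i j).im) * X i j +
          (Real.sin (θ i) * (u i j).im + Real.cos (θ i) * (u i j).re) * Y i j)| ≤
      Real.sqrt (4 * ∑ j, (a j) ^ 2 * zNormSq l k u j) * |η| *
        Real.sqrt (∑ i, ∑ j, (X i j ^ 2 + Y i j ^ 2)) := by
  set P : (i : Fin (l + 1)) → Fin (k i) → ℝ :=
    fun i j => Real.sin (θ i) * (u i j).re - Real.cos (θ i) * (u i j).im with hP
  set Q : (i : Fin (l + 1)) → Fin (k i) → ℝ :=
    fun i j => Real.sin (θ i) * (u i j).im + Real.cos (θ i) * (u i j).re with hQ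
  have hterm : ∀ i j, |P i j * X i j + Q i j * Y i j| ≤
      Real.sqrt (Complex.normSq (u i j)) * Real.sqrt (X i j ^ 2 + Y i j ^ 2) := by
    intro i j
    have hPQ : P i j ^ 2 + Q i j ^ 2 = (u i j).re ^ 2 + (u i j).im ^ 2 := by
      simp only [hP, hQ]
      linear_combination ((u i j).re ^ 2 + (u i j).im ^ 2) * Real.sin_sq_add_cos_sq (θ i)
    have key : (P i j * X i j + Q i j * Y i j) ^ 2 ≤
        Complex.normSq (u i j) * (X i j ^ 2 + Y i j ^ 2) := by
      rw [Complex.normSq_apply]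
      nlinarith [sq_nonneg (P i j * Y i j - Q i j * X i j), hPQ]
    calc |P i j * X i j + Q i j * Y i j|
        = Real.sqrt ((P i j * X i j + Q i j * Y i j) ^ 2) := (Real.sqrt_sq_eq_abs _).symm
      _ ≤ Real.sqrt (Complex.normSq (u i j) * (X i j ^ 2 + Y i j ^ 2)) := Real.sqrt_le_sqrt key
      _ = Real.sqrt (Complex.normSq (u i j)) * Real.sqrt (X i j ^ 2 + Y i j ^ 2) :=
          Real.sqrt_mul (Complex.normSq_nonneg _) _
  have hS : |∑ i, a i * ∑ j, (P i j * X i j + Q i j * Y i j)| ≤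
      Real.sqrt (∑ j, (a j) ^ 2 * zNormSq l k u j) *
        Real.sqrt (∑ i, ∑ j, (X i j ^ 2 + Y i j ^ 2)) := by
    have h1 : |∑ i, a i * ∑ j, (P i j * X i j + Q i j * Y i j)| ≤
        ∑ i, ∑ j, (a i * Real.sqrt (Complex.normSq (u i j))) *
          Real.sqrt (X i j ^ 2 + Y i j ^ 2) := by
      refine (Finset.abs_sum_le_sum_abs _ _).trans (Finset.sum_le_sum fun i _ => ?_)
      rw [abs_mul, _root_.abs_of_nonneg (ha i)]
      calc a i * |∑ j, (P i j * X i j + Q i j * Y i j)|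
          ≤ a i * ∑ j, |P i j * X i j + Q i j * Y i j| :=
            mul_le_mul_of_nonneg_left (Finset.abs_sum_le_sum_abs _ _) (ha i)
        _ ≤ a i * ∑ j, Real.sqrt (Complex.normSq (u i j)) *
              Real.sqrt (X i j ^ 2 + Y i j ^ 2) :=
            mul_le_mul_of_nonneg_left (Finset.sum_le_sum fun j _ => hterm i j) (ha i)
        _ = ∑ j, (a i * Real.sqrt (Complex.normSq (u i j))) *
              Real.sqrt (X i j ^ 2 + Y i j ^ 2) := by rw [Finset.mul_sum]; ring_nf
    have h2 := Real.sum_mul_le_sqrt_mul_sqrt (Finset.univ : Finset ((i : Fin (l + 1)) × Fin (k i)))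
      (fun p => a p.1 * Real.sqrt (Complex.normSq (u p.1 p.2)))
      (fun p => Real.sqrt (X p.1 p.2 ^ 2 + Y p.1 p.2 ^ 2))
    rw [← Finset.univ_sigma_univ, Finset.sum_sigma, Finset.sum_sigma, Finset.sum_sigma] at h2
    have e1 : ∀ (i : Fin (l+1)) (j : Fin (k i)),
        (a i * Real.sqrt (Complex.normSq (u i j))) ^ 2 = (a i) ^ 2 * Complex.normSq (u i j) := by
      intro i j
      rw [mul_pow, Real.sq_sqrt (Complex.normSq_nonneg _)]
    have e2 : ∀ (i : Fin (l+1)) (j : Fin (k i)),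
        (Real.sqrt (X i j ^ 2 + Y i j ^ 2)) ^ 2 = X i j ^ 2 + Y i j ^ 2 := by
      intro i j
      rw [Real.sq_sqrt (by positivity)]
    simp only [e1, e2] at h2
    refine h1.trans (h2.trans ?_)
    have : ∀ i : Fin (l+1), ∑ j, (a i) ^ 2 * Complex.normSq (u i j)
        = (a i) ^ 2 * zNormSq l k u i := by
      intro i; rw [zNormSq, Finset.mul_sum]
    simp only [this]
    exact le_rfl
  have h4 : Real.sqrt (4 * ∑ j, (a j) ^ 2 * zNormSq l k u j)
      = 2 * Real.sqrt (∑ j, (a j) ^ 2 * zNormSq l k u j) := by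
    rw [show (4 : ℝ) = 2 ^ 2 by norm_num, Real.sqrt_mul (by positivity), Real.sqrt_sq (by norm_num)]
  rw [abs_mul, abs_mul, _root_.abs_two, h4]
  calc 2 * |η| * |∑ i, a i * ∑ j, (P i j * X i j + Q i j * Y i j)|
      ≤ 2 * |η| * (Real.sqrt (∑ j, (a j) ^ 2 * zNormSq l k u j) *
          Real.sqrt (∑ i, ∑ j, (X i j ^ 2 + Y i j ^ 2))) := by
        exact mul_le_mul_of_nonneg_left hS (by positivity)
    _ = 2 * Real.sqrt (∑ j, (a j) ^ 2 * zNormSq l k u j) * |η| *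
        Real.sqrt (∑ i, ∑ j, (X i j ^ 2 + Y i j ^ 2)) := by ring

/-- Let `f : ℍ(𝒦,𝒜) → ℝ` be smooth, `u = (u₁,…,u_l)` with `u_l ≠ 0` and
`0 < |η| < π`. Then for every `s ∈ (0,1]`, writing `g_s = Ψ(u,sη)`,
`(d/ds) f(g_s) = 2η ∑ᵢ aᵢ ∑ⱼ [(sin(2aᵢsη) Re u_{i,j} − cos(2aᵢsη) Im u_{i,j}) X_{i,j}f(g_s)
+ (sin(2aᵢsη) Im u_{i,j} + cos(2aᵢsη) Re u_{i,j}) Y_{i,j}f(g_s)]`; consequently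
`|(d/ds) f(Ψ(u,sη))| ≤ U|η| |∇f(Ψ(u,sη))|`. -/
theorem statement19 (l : ℕ) (k : Fin (l + 1) → ℕ) (hk : ∀ i, 0 < k i)
    (a : Fin (l + 1) → ℝ) (ha0 : 0 < a 0) (haMono : StrictMono a)
    (haLast : a (Fin.last l) = 1)
    (f : Heis l k → ℝ) (hf : ContDiff ℝ (⊤ : ℕ∞) f)
    (u : (i : Fin (l + 1)) → Fin (k i) → ℂ) (hu : u (Fin.last l) ≠ 0)
    (η : ℝ) (hη0 : 0 < |η|) (hηπ : |η| < Real.pi) :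
    ∀ s ∈ Set.Ioc (0 : ℝ) 1,
      HasDerivAt (fun s' : ℝ => f (Psi l k a u (s' * η)))
        (2 * η * ∑ i, a i * ∑ j,
          ((Real.sin (2 * a i * s * η) * (u i j).re -
              Real.cos (2 * a i * s * η) * (u i j).im) *
              Xvf l k a i j f (Psi l k a u (s * η)) +
            (Real.sin (2 * a i * s * η) * (u i j).im +
              Real.cos (2 * a i * s * η) * (u i j).re) *
              Yvf l k a i j f (Psi l k a u (s * η)))) s ∧
      |2 * η * ∑ i, a i * ∑ j,
          ((Real.sin (2 * a i * s * η) * (u i j).re -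
              Real.cos (2 * a i * s * η) * (u i j).im) *
              Xvf l k a i j f (Psi l k a u (s * η)) +
            (Real.sin (2 * a i * s * η) * (u i j).im +
              Real.cos (2 * a i * s * η) * (u i j).re) *
              Yvf l k a i j f (Psi l k a u (s * η)))| ≤
        Ufun l k a u * |η| * gradNorm l k a f (Psi l k a u (s * η)) := by
  intro s hs
  have ha : ∀ i, 0 ≤ a i := fun i => (ha0.trans_le (haMono.monotone (Fin.zero_le i))).le
  have hdf : DifferentiableAt ℝ f (Psi l k a u (s * η)) :=
    (hf.differentiable (by simp)).differentiableAt
  set c : Fin (l + 1) → ℂ := fun i => -(2 * Complex.I * (a i : ℂ) * (η : ℂ)) with hc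
  have hγ : HasDerivAt (fun s' : ℝ => Psi l k a u (s' * η))
      ((fun i j => -(Complex.exp (c i * (s : ℂ)) * c i) * u i j,
        ∑ j, 2 * a j * zNormSq l k u j *
          (2 * a j * η - Real.cos (2 * a j * s * η) * (2 * a j * η))) : Heis l k) s := by
    unfold Psi
    refine HasDerivAt.prodMk ?_ ?_
    · rw [hasDerivAt_pi]
      intro i
      rw [hasDerivAt_pi]
      intro j
      have hfun : ∀ s' : ℝ,
          (1 - Complex.exp (-(2 * Complex.I * (a i : ℂ) * ((s' * η : ℝ) : ℂ)))) * u i j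
            = (1 - Complex.exp (c i * (s' : ℂ))) * u i j := by
        intro s'
        congr 3
        simp only [hc]
        push_cast
        ring
      simp only [hfun]
      have h0 : HasDerivAt (fun s' : ℝ => c i * (s' : ℂ)) (c i) s := by
        simpa using (Complex.ofRealCLM.hasDerivAt (x := s)).const_mul (c i)
      simpa using ((hasDerivAt_const s (1 : ℂ)).sub h0.cexp).mul_const (u i j)
    · refine HasDerivAt.fun_sum fun j _ => ?_
      have hfun : ∀ s' : ℝ, 2 * a j * (s' * η) = 2 * a j * η * s' := fun s' => by ring
      simp only [hfun]
      have h1 : HasDerivAt (fun s' : ℝ => 2 * a j * η * s' - Real.sin (2 * a j * η * s'))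
          (2 * a j * η - Real.cos (2 * a j * s * η) * (2 * a j * η)) s := by
        rw [show 2 * a j * s * η = 2 * a j * η * s by ring]
        simpa using ((hasDerivAt_id s).const_mul (2 * a j * η)).fun_sub
          (((hasDerivAt_id s).const_mul (2 * a j * η)).sin)
      simpa [mul_comm, mul_assoc, mul_left_comm] using
        h1.const_mul (2 * a j * zNormSq l k u j)
  have hcomp := hdf.hasFDerivAt.comp_hasDerivAt s hγ
  have hX : ∀ (i : Fin (l + 1)) (j : Fin (k i)),
      Xvf l k a i j f (Psi l k a u (s * η)) = fderiv ℝ f (Psi l k a u (s * η))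
        ((Pi.single i (Pi.single j (1 : ℂ)), 2 * a i * ((Psi l k a u (s * η)).1 i j).im) :
          Heis l k) := fun i j => hdf.lineDeriv_eq_fderiv
  have hY : ∀ (i : Fin (l + 1)) (j : Fin (k i)),
      Yvf l k a i j f (Psi l k a u (s * η)) = fderiv ℝ f (Psi l k a u (s * η))
        ((Pi.single i (Pi.single j (Complex.I)),
          -(2 * a i * ((Psi l k a u (s * η)).1 i j).re)) : Heis l k) :=
    fun i j => hdf.lineDeriv_eq_fderiv
  -- exponential computations
  have hexp : ∀ i : Fin (l + 1), Complex.exp (c i * (s : ℂ)) =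
      Complex.exp (((-(2 * a i * s * η) : ℝ) : ℂ) * Complex.I) := by
    intro i
    congr 1
    simp only [hc]
    push_cast
    ring
  have hexp2 : ∀ i : Fin (l + 1),
      Complex.exp (-(2 * Complex.I * (a i : ℂ) * ((s * η : ℝ) : ℂ))) =
      Complex.exp (((-(2 * a i * s * η) : ℝ) : ℂ) * Complex.I) := by
    intro i
    congr 1
    push_cast
    ring
  have hE : ∀ i : Fin (l + 1), Complex.exp (((-(2 * a i * s * η) : ℝ) : ℂ) * Complex.I) =
      (Real.cos (2 * a i * s * η) : ℂ) - (Real.sin (2 * a i * s * η) : ℂ) * Complex.I := by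
    intro i
    rw [Complex.exp_mul_I, ← Complex.ofReal_cos, ← Complex.ofReal_sin, Real.cos_neg, Real.sin_neg]
    push_cast
    ring
  -- the vector decomposition
  have hveq : ((fun i j => -(Complex.exp (c i * (s : ℂ)) * c i) * u i j,
        ∑ j, 2 * a j * zNormSq l k u j *
          (2 * a j * η - Real.cos (2 * a j * s * η) * (2 * a j * η))) : Heis l k)
      = ∑ i, ∑ j,
        ((2 * η * a i * (Real.sin (2 * a i * s * η) * (u i j).re -
            Real.cos (2 * a i * s * η) * (u i j).im)) •
          ((Pi.single i (Pi.single j (1 : ℂ)),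
            2 * a i * ((Psi l k a u (s * η)).1 i j).im) : Heis l k) +
         (2 * η * a i * (Real.sin (2 * a i * s * η) * (u i j).im +
            Real.cos (2 * a i * s * η) * (u i j).re)) •
          ((Pi.single i (Pi.single j (Complex.I)),
            -(2 * a i * ((Psi l k a u (s * η)).1 i j).re)) : Heis l k)) := by
    refine Prod.ext ?_ ?_
    · funext i₀ j₀
      simp only [Prod.fst_sum, Prod.fst_add, Prod.smul_fst, Finset.sum_apply, Pi.add_apply,
        Pi.smul_apply]
      rw [Finset.sum_eq_single i₀]
      rotate_left
      · intro b _ hb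
        simp [Pi.single_eq_of_ne (Ne.symm hb)]
      · intro h
        exact absurd (Finset.mem_univ i₀) h
      simp only [Pi.single_eq_same]
      rw [Finset.sum_eq_single j₀]
      rotate_left
      · intro b _ hb
        simp [Pi.single_eq_of_ne (Ne.symm hb)]
      · intro h
        exact absurd (Finset.mem_univ j₀) h
      simp only [Pi.single_eq_same, Complex.real_smul]
      rw [hexp i₀, hE i₀]
      rw [show c i₀ = -(2 * Complex.I * (a i₀ : ℂ) * (η : ℂ)) from rfl]
      apply Complex.ext <;>
        simp only [Complex.mul_re, Complex.mul_im, Complex.add_re, Complex.add_im,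
          Complex.sub_re, Complex.sub_im, Complex.neg_re, Complex.neg_im, Complex.I_re,
          Complex.I_im, Complex.ofReal_re, Complex.ofReal_im, Complex.one_re, Complex.one_im,
          Complex.re_ofNat, Complex.im_ofNat] <;>
        ring
    · simp only [Prod.snd_sum, Prod.snd_add, Prod.smul_snd, smul_eq_mul]
      refine Finset.sum_congr rfl fun i _ => ?_
      rw [zNormSq]
      rw [show 2 * a i * (∑ j, Complex.normSq (u i j)) *
            (2 * a i * η - Real.cos (2 * a i * s * η) * (2 * a i * η))
          = ∑ j, 2 * a i * Complex.normSq (u i j) *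
            (2 * a i * η - Real.cos (2 * a i * s * η) * (2 * a i * η)) by
        rw [Finset.mul_sum, Finset.sum_mul]]
      refine Finset.sum_congr rfl fun j _ => ?_
      simp only [Psi]
      rw [hexp2 i, hE i]
      simp only [Complex.mul_re, Complex.mul_im, Complex.add_re, Complex.add_im,
        Complex.sub_re, Complex.sub_im, Complex.neg_re, Complex.neg_im, Complex.I_re,
        Complex.I_im, Complex.ofReal_re, Complex.ofReal_im, Complex.one_re, Complex.one_im,
        Complex.re_ofNat, Complex.im_ofNat, Complex.normSq_apply]
      linear_combination (-(4 * η * (a i) ^ 2) * ((u i j).re ^ 2 + (u i j).im ^ 2)) *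
        Real.sin_sq_add_cos_sq (2 * a i * s * η)
  have hLv : fderiv ℝ f (Psi l k a u (s * η))
      ((fun i j => -(Complex.exp (c i * (s : ℂ)) * c i) * u i j,
        ∑ j, 2 * a j * zNormSq l k u j *
          (2 * a j * η - Real.cos (2 * a j * s * η) * (2 * a j * η))) : Heis l k)
      = 2 * η * ∑ i, a i * ∑ j,
          ((Real.sin (2 * a i * s * η) * (u i j).re -
              Real.cos (2 * a i * s * η) * (u i j).im) *
              Xvf l k a i j f (Psi l k a u (s * η)) +
            (Real.sin (2 * a i * s * η) * (u i j).im +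
              Real.cos (2 * a i * s * η) * (u i j).re) *
              Yvf l k a i j f (Psi l k a u (s * η))) := by
    rw [hveq]
    simp only [map_sum, map_add, _root_.map_smul, smul_eq_mul]
    simp only [hX, hY]
    rw [Finset.mul_sum]
    refine Finset.sum_congr rfl fun i _ => ?_
    rw [Finset.mul_sum, Finset.mul_sum]
    refine Finset.sum_congr rfl fun j _ => ?_
    ring
  refine ⟨hLv ▸ hcomp, ?_⟩
  have := aux_ineq l k a ha u (fun i => 2 * a i * s * η) η
    (fun i j => Xvf l k a i j f (Psi l k a u (s * η)))
    (fun i j => Yvf l k a i j f (Psi l k a u (s * η)))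
  rw [Ufun, gradNorm]
  exact this


end
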